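/- Let F be the Leibniz algebra on basis {e_1, e_2, ...} with nonzero products [e_i, e_1] = e_{i+1} for i ≥ 2. The two derivations d_1, d_2 of F given by d_1(e_1) = e_1, d_1(e_i) = (i-2)e_i (i ≥ 2) and d_2(e_1) = 0, d_2(e_i) = e_i (i ≥ 2) are residually nil-independent: for scalars α, β, the map f = α d_1 + β d_2 satisfies ⋂_{k≥1} Im(f^k) = 0 if and only if α = β = 0. -/

import Mathlib

noncomputable section

/-- The underlying space; the basis vector `e_i` (i ≥ 1) is `Finsupp.single (i-1) 1`. -/
abbrev V : Type := ℕ →₀ ℂ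

/-- Shift-up map: `single n ↦ single (n+1)` for `n ≥ 1` (i.e. `e_i ↦ e_{i+1}` for `i ≥ 2`). -/
def sh1 : V →ₗ[ℂ] V :=
  Finsupp.lsum ℂ fun n => if 1 ≤ n then (Finsupp.lsingle (n + 1) : ℂ →ₗ[ℂ] V) else 0

/-- Bracket of the filiform Leibniz algebra `F`: `[e_i, e_1] = e_{i+1}` for `i ≥ 2`. -/
def brF (f g : V) : V := g 0 • sh1 f

/-- `d₁(e_1) = e_1`, `d₁(e_i) = (i-2) e_i` for `i ≥ 2`. -/
def d1 : V →ₗ[ℂ] V :=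
  Finsupp.lsum ℂ fun n =>
    (if n = 0 then (1 : ℂ) else (n : ℂ) - 1) • Finsupp.lsingle n

/-- `d₂(e_1) = 0`, `d₂(e_i) = e_i` for `i ≥ 2`. -/
def d2 : V →ₗ[ℂ] V :=
  Finsupp.lsum ℂ fun n =>
    (if 1 ≤ n then (1 : ℂ) else 0) • Finsupp.lsingle n

/-!
An endomorphism `f` of `F` with `⋂ₖ Im (f^k) = 0` can have no nonzero eigenvalue, since an
eigenvector for a nonzero eigenvalue lies in the image of every power of `f`. As `e_1` and `e_2`
are eigenvectors of `α d₁ + β d₂` with eigenvalues `α` and `β`, residual nilpotency forces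
`α = β = 0`. That `d₁` and `d₂` are derivations comes down to how they commute with right
multiplication by `e_1`, the only nonzero right multiplication of `F`.
-/

namespace Module.End

variable {K M : Type*} [Field K] [AddCommGroup M] [Module K M] {f : End K M} {μ : K} {v : M}

theorem HasEigenvector.mem_range_pow (hv : f.HasEigenvector μ v) (hμ : μ ≠ 0) (n : ℕ) :
    v ∈ LinearMap.range (f ^ n) :=
  ⟨(μ ^ n)⁻¹ • v, by
    rw [map_smul, hv.pow_apply, smul_smul, inv_mul_cancel₀ (pow_ne_zero n hμ), one_smul]⟩

theorem HasEigenvector.eq_zero_of_iInf_range_pow_eq_bot (hv : f.HasEigenvector μ v)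
    (hf : ⨅ k : ℕ, LinearMap.range (f ^ (k + 1)) = ⊥) : μ = 0 := by
  by_contra hμ
  have hmem : v ∈ ⨅ k : ℕ, LinearMap.range (f ^ (k + 1)) :=
    Submodule.mem_iInf _ |>.mpr fun k => hv.mem_range_pow hμ (k + 1)
  exact hv.2 (by rwa [hf, Submodule.mem_bot] at hmem)

end Module.End

theorem brF_derivation_of_comp_sh1 (d : V →ₗ[ℂ] V) (a : ℂ)
    (hsh : d ∘ₗ sh1 = sh1 ∘ₗ d + a • sh1)
    (hcoord : Finsupp.lapply 0 ∘ₗ d = a • Finsupp.lapply 0) (u v : V) :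
    d (brF u v) = brF (d u) v + brF u (d v) := by
  have hsh_u : d (sh1 u) = sh1 (d u) + a • sh1 u := LinearMap.congr_fun hsh u
  have hcoord_v : d v 0 = a * v 0 := LinearMap.congr_fun hcoord v
  simp only [brF, map_smul, hsh_u, hcoord_v]
  module

theorem sh1_single (n : ℕ) (c : ℂ) :
    sh1 (Finsupp.single n c) = if 1 ≤ n then Finsupp.single (n + 1) c else 0 := by
  simp only [sh1, Finsupp.lsum_single]
  split_ifs <;> simp

theorem d1_single (n : ℕ) (c : ℂ) :
    d1 (Finsupp.single n c) = (if n = 0 then (1 : ℂ) else (n : ℂ) - 1) • Finsupp.single n c := by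
  rw [d1, Finsupp.lsum_single]
  split_ifs <;> simp

theorem d2_single (n : ℕ) (c : ℂ) :
    d2 (Finsupp.single n c) = (if 1 ≤ n then (1 : ℂ) else 0) • Finsupp.single n c := by
  rw [d2, Finsupp.lsum_single]
  split_ifs <;> simp

theorem d1_comp_sh1 : d1 ∘ₗ sh1 = sh1 ∘ₗ d1 + (1 : ℂ) • sh1 := by
  refine Finsupp.lhom_ext fun n c => ?_
  cases n with
  | zero => simp [sh1_single, d1_single]
  | succ n =>
    simp only [LinearMap.add_apply, LinearMap.comp_apply, LinearMap.smul_apply, sh1_single,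
      d1_single, map_smul, le_add_iff_nonneg_left, zero_le, Nat.add_one_ne_zero, if_true, if_false]
    push_cast
    module

theorem d2_comp_sh1 : d2 ∘ₗ sh1 = sh1 ∘ₗ d2 + (0 : ℂ) • sh1 := by
  refine Finsupp.lhom_ext fun n c => ?_
  cases n <;> simp [sh1_single, d2_single]

theorem lapply_zero_comp_d1 : Finsupp.lapply 0 ∘ₗ d1 = (1 : ℂ) • Finsupp.lapply 0 := by
  refine Finsupp.lhom_ext fun n c => ?_
  cases n <;> simp [d1_single]

theorem lapply_zero_comp_d2 : Finsupp.lapply 0 ∘ₗ d2 = (0 : ℂ) • Finsupp.lapply 0 := by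
  refine Finsupp.lhom_ext fun n c => ?_
  cases n <;> simp [d2_single]

theorem hasEigenvector_single_zero (α β : ℂ) :
    Module.End.HasEigenvector (α • d1 + β • d2) α (Finsupp.single 0 1) :=
  ⟨by simp [Module.End.mem_genEigenspace_one, d1_single, d2_single], by simp⟩

theorem hasEigenvector_single_one (α β : ℂ) :
    Module.End.HasEigenvector (α • d1 + β • d2) β (Finsupp.single 1 1) :=
  ⟨by simp [Module.End.mem_genEigenspace_one, d1_single, d2_single], by simp⟩

/-- `d₁` and `d₂` are derivations of `F` and are residually nil-independent:
`f = α d₁ + β d₂` satisfies `⋂_{k ≥ 1} Im (f^k) = 0` iff `α = β = 0`. -/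
theorem stmt18 :
    (∀ u v : V, d1 (brF u v) = brF (d1 u) v + brF u (d1 v)) ∧
    (∀ u v : V, d2 (brF u v) = brF (d2 u) v + brF u (d2 v)) ∧
    (∀ α β : ℂ,
      (⨅ k : ℕ, LinearMap.range ((α • d1 + β • d2) ^ (k + 1))) = ⊥ ↔ α = 0 ∧ β = 0) := by
  refine ⟨brF_derivation_of_comp_sh1 d1 1 d1_comp_sh1 lapply_zero_comp_d1,
    brF_derivation_of_comp_sh1 d2 0 d2_comp_sh1 lapply_zero_comp_d2, fun α β => ⟨?_, ?_⟩⟩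
  · intro hf
    exact ⟨(hasEigenvector_single_zero α β).eq_zero_of_iInf_range_pow_eq_bot hf,
      (hasEigenvector_single_one α β).eq_zero_of_iInf_range_pow_eq_bot hf⟩
  · rintro ⟨rfl, rfl⟩
    exact eq_bot_iff.mpr ((iInf_le _ 0).trans (by simp))
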